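/- Let q(x,y) = ½ xᵀA x + ½ yᵀB y + xᵀC y + aᵀx + bᵀy + c₀ be a quadratic game on ℝ^n × ℝ^m with A, B symmetric. Then (x*,y*) is a local minimax point of q if and only if (x*,y*) is stationary (i.e. A x* + C y* + a = 0 and Cᵀ x* + B y* + b = 0) and (x*,y*) is a global minimax point of q. In particular, every local minimax point of an unconstrained quadratic game is a global minimax point. -/

import Mathlib

open Filter Matrix

/-- Local upper envelope `f̄_{ε,y*}` (unconstrained case), in the extended reals. -/
noncomputable def envU {n m : ℕ}
    (f : EuclideanSpace ℝ (Fin n) → EuclideanSpace ℝ (Fin m) → ℝ)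
    (ystar : EuclideanSpace ℝ (Fin m)) (ε : ℝ)
    (x : EuclideanSpace ℝ (Fin n)) : EReal :=
  ⨆ y ∈ {y : EuclideanSpace ℝ (Fin m) | ‖y - ystar‖ ≤ ε}, ((f x y : ℝ) : EReal)

/-- `(x*, y*)` is a local minimax point of `f` (unconstrained case). -/
def IsLocalMinimax {n m : ℕ}
    (f : EuclideanSpace ℝ (Fin n) → EuclideanSpace ℝ (Fin m) → ℝ)
    (xstar : EuclideanSpace ℝ (Fin n)) (ystar : EuclideanSpace ℝ (Fin m)) : Prop :=
  (∃ ε > (0 : ℝ), ∀ y, ‖y - ystar‖ ≤ ε → f xstar y ≤ f xstar ystar) ∧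
  (∃ εseq : ℕ → ℝ, (∀ k, 0 < εseq k) ∧ Tendsto εseq atTop (nhds 0) ∧
    ∀ k, ∃ δ > (0 : ℝ), ∀ x, ‖x - xstar‖ ≤ δ →
      envU f ystar (εseq k) xstar ≤ envU f ystar (εseq k) x)

/-- `(xs, ys)` is a global minimax point of `f` (unconstrained case). -/
def IsGlobalMinimax {n m : ℕ}
    (f : EuclideanSpace ℝ (Fin n) → EuclideanSpace ℝ (Fin m) → ℝ)
    (xs : EuclideanSpace ℝ (Fin n)) (ys : EuclideanSpace ℝ (Fin m)) : Prop :=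
  (∀ y, f xs y ≤ f xs ys) ∧
  (∀ x, ∀ c : ℝ, (∀ y, f x y ≤ c) → f xs ys ≤ c)

/-- The quadratic game `q(x,y) = ½ xᵀAx + ½ yᵀBy + xᵀCy + aᵀx + bᵀy + c₀`. -/
noncomputable def quadGame {n m : ℕ} (A : Matrix (Fin n) (Fin n) ℝ)
    (B : Matrix (Fin m) (Fin m) ℝ) (C : Matrix (Fin n) (Fin m) ℝ)
    (a : Fin n → ℝ) (b : Fin m → ℝ) (c₀ : ℝ)
    (x : EuclideanSpace ℝ (Fin n)) (y : EuclideanSpace ℝ (Fin m)) : ℝ :=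
  (1 / 2) * (x ⬝ᵥ (A *ᵥ x)) + (1 / 2) * (y ⬝ᵥ (B *ᵥ y)) + x ⬝ᵥ (C *ᵥ y) +
    a ⬝ᵥ x + b ⬝ᵥ y + c₀

/-!
Expand `q(x* + h, y* + u) = q* + ⟪d, h⟫ + ⟪g, u⟫ + Q(h, u)` with `Q` the homogeneous quadratic
part. Local maximality in `y` forces `g = 0` and `B ≤ 0`. Along `h = -t d` the envelope of radius
`ε` grows by at most `-t ‖d‖² + O(t²) + t ε ‖Cᵀ d‖`, so letting `ε → 0` forces `d = 0`.

At a stationary point with `B ≤ 0`, completing the square in `u` shows that global minimaxity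
means `Q(h, -v) ≥ 0` whenever `B v = Cᵀ h` (if `Cᵀ h ∉ range B`, then `sup_u Q(h, u) = ∞`). Since
`Q` is homogeneous, this already follows from the envelope condition at one radius. Conversely, it
yields for every radius a neighbourhood of `x*` on which the envelope stays above `q*`.
-/

open Topology RealInnerProductSpace

lemma LinearMap.exists_bound₂_of_finiteDimensional {𝕜 E F G : Type*} [NontriviallyNormedField 𝕜]
    [CompleteSpace 𝕜] [NormedAddCommGroup E] [NormedSpace 𝕜 E] [FiniteDimensional 𝕜 E]
    [NormedAddCommGroup F] [NormedSpace 𝕜 F] [FiniteDimensional 𝕜 F] [NormedAddCommGroup G]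
    [NormedSpace 𝕜 G] (f : E →ₗ[𝕜] F →ₗ[𝕜] G) : ∃ C ≥ 0, ∀ x y, ‖f x y‖ ≤ C * ‖x‖ * ‖y‖ := by
  let fc : E →L[𝕜] F →L[𝕜] G :=
    LinearMap.toContinuousLinearMap (LinearMap.toContinuousLinearMap.toLinearMap ∘ₗ f)
  exact ⟨‖fc‖, norm_nonneg fc, fun x y => fc.le_opNorm₂ x y⟩

lemma eventually_nhds_of_forall_norm_sub_le {X : Type*} [SeminormedAddCommGroup X] {x₀ : X}
    {p : X → Prop} {δ : ℝ} (hδ : 0 < δ) (h : ∀ x, ‖x - x₀‖ ≤ δ → p x) : ∀ᶠ x in 𝓝 x₀, p x :=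
  Filter.eventually_of_mem (Metric.closedBall_mem_nhds x₀ hδ) fun x hx =>
    h x (mem_closedBall_iff_norm.mp hx)

section QuadPart

variable {E F : Type*} [NormedAddCommGroup E] [InnerProductSpace ℝ E]
  [NormedAddCommGroup F] [InnerProductSpace ℝ F]

/-- Split `h = h₁ + h₂` with `h₁ ∈ ker Z` and `h₂ ⊥ ker Z`; then `‖h₂‖ = O(‖Z h‖)` because `Z` is
injective on `(ker Z)ᗮ`, and `f h h - f h₁ h₁ = O(‖h‖ ‖h₂‖)`. -/
lemma LinearMap.exists_lower_bound_of_nonneg_on_ker {G : Type*} [NormedAddCommGroup G]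
    [NormedSpace ℝ G] [FiniteDimensional ℝ E] (f : E →ₗ[ℝ] E →ₗ[ℝ] ℝ) (Z : E →ₗ[ℝ] G)
    (hf : ∀ h, Z h = 0 → 0 ≤ f h h) : ∃ K ≥ 0, ∀ h, -(K * ‖h‖ * ‖Z h‖) ≤ f h h := by
  set N := LinearMap.ker Z
  obtain ⟨C, hC0, hC⟩ := f.exists_bound₂_of_finiteDimensional
  obtain ⟨K, -, hK⟩ := (Z.domRestrict Nᗮ).exists_antilipschitzWith <| by
    refine (LinearMap.ker_eq_bot').mpr fun x hx => Subtype.ext ?_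
    exact (Submodule.inner_right_of_mem_orthogonal hx x.2 : ⟪(x : E), x⟫ = 0) |>
      inner_self_eq_zero.mp
  refine ⟨2 * C * K, by positivity, fun h => ?_⟩
  set h₁ := N.starProjection h
  set h₂ := h - h₁
  have hZ₁ : Z h₁ = 0 := N.starProjection_apply_mem h
  have hZ₂ : Z h₂ = Z h := by simp [h₂, hZ₁]
  have h₁_le : ‖h₁‖ ≤ ‖h‖ := N.norm_starProjection_apply_le h
  have h₂_le : ‖h₂‖ ≤ K * ‖Z h‖ := by
    simpa [hZ₂] using ZeroHomClass.bound_of_antilipschitz _ hK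
      ⟨h₂, N.sub_starProjection_mem_orthogonal h⟩
  have hsplit : f h h = f h₁ h₁ + f h₁ h₂ + f h₂ h := by
    have e : h₁ + h₂ = h := add_sub_cancel h₁ h
    calc f h h = f h₁ (h₁ + h₂) + f h₂ h := by rw [e, ← LinearMap.add_apply, ← map_add, e]
      _ = _ := by rw [map_add]
  have hcross : |f h₁ h₂| + |f h₂ h| ≤ 2 * C * ‖h‖ * ‖h₂‖ := by
    have c₁ := hC h₁ h₂
    have c₂ := hC h₂ h
    rw [Real.norm_eq_abs] at c₁ c₂
    nlinarith [mul_le_mul_of_nonneg_left h₁_le (mul_nonneg hC0 (norm_nonneg h₂))]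
  calc -(2 * C * K * ‖h‖ * ‖Z h‖) ≤ -(2 * C * ‖h‖ * ‖h₂‖) := by
        have := mul_le_mul_of_nonneg_left h₂_le (by positivity : 0 ≤ 2 * C * ‖h‖)
        linarith
    _ ≤ f h₁ h₁ + f h₁ h₂ + f h₂ h := by
        linarith [hf h₁ hZ₁, neg_abs_le (f h₁ h₂), neg_abs_le (f h₂ h)]
    _ = f h h := hsplit.symm

variable (A : E →ₗ[ℝ] E) (B : F →ₗ[ℝ] F) (W : E →ₗ[ℝ] F)

/-- `½ hᵀAh + ½ uᵀBu + hᵀCu` with `W = Cᵀ`. -/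
noncomputable def quadPart (h : E) (u : F) : ℝ :=
  (1 / 2) * ⟪h, A h⟫ + (1 / 2) * ⟪u, B u⟫ + ⟪W h, u⟫

variable {A B W}

lemma quadPart_smul (t : ℝ) (h : E) (u : F) :
    quadPart A B W (t • h) (t • u) = t ^ 2 * quadPart A B W h u := by
  simp only [quadPart, map_smul, inner_smul_left, inner_smul_right, RCLike.conj_to_real]
  ring

lemma quadPart_zero_left (u : F) : quadPart A B W 0 u = (1 / 2) * ⟪u, B u⟫ := by
  simp [quadPart]

lemma quadPart_le_quadPart_neg (hB : B.IsSymmetric) (hBneg : ∀ u, ⟪u, B u⟫ ≤ 0) {h : E} {v : F}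
    (hv : B v = W h) (u : F) : quadPart A B W h u ≤ quadPart A B W h (-v) := by
  have hsq := hBneg (u + v)
  simp only [quadPart, ← hv, map_add, map_neg, inner_add_left, inner_add_right, inner_neg_left,
    inner_neg_right, neg_neg] at hsq ⊢
  linarith [hB v u, real_inner_comm u (B v), real_inner_comm v (B v)]

lemma quadPart_add_smul_of_apply_eq_zero (hB : B.IsSymmetric) {z : F} (hz : B z = 0) (h : E)
    (u : F) (s : ℝ) : quadPart A B W h (u + s • z) = quadPart A B W h u + s * ⟪W h, z⟫ := by
  have hzu : ⟪z, B u⟫ = 0 := by rw [← hB, hz, inner_zero_left]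
  simp only [quadPart, map_add, map_smul, hz, smul_zero, add_zero, inner_add_left,
    inner_add_right, inner_smul_left, inner_smul_right, hzu,
    RCLike.conj_to_real]
  ring

lemma quadPart_neg_add_smul (hB : B.IsSymmetric) {h : E} {v z : F} (hz : B z = 0)
    (hW : W h = B v + z) (s : ℝ) :
    quadPart A B W h (-v + s • z) = quadPart A B W h (-v) + s * ‖z‖ ^ 2 := by
  rw [quadPart_add_smul_of_apply_eq_zero hB hz, hW, inner_add_left, hB, hz, inner_zero_right,
    zero_add, real_inner_self_eq_norm_sq]

lemma LinearMap.IsSymmetric.mem_range_of_forall_le [FiniteDimensional ℝ F] (hB : B.IsSymmetric)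
    {w : F} {M : ℝ} (hM : ∀ u, (1 / 2) * ⟪u, B u⟫ + ⟪w, u⟫ ≤ M) : w ∈ LinearMap.range B := by
  rw [← Submodule.orthogonal_orthogonal (LinearMap.range B), hB.orthogonal_range]
  intro z hz
  rw [LinearMap.mem_ker] at hz
  rw [real_inner_comm]
  by_contra hwz
  have := hM (((|M| + 1) / ⟪w, z⟫) • z)
  rw [map_smul, hz, smul_zero, inner_zero_right, inner_smul_right, div_mul_cancel₀ _ hwz] at this
  linarith [le_abs_self M]

lemma exists_linearMap_sub_mem_orthogonal_range [FiniteDimensional ℝ F] (B : F →ₗ[ℝ] F)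
    (W : E →ₗ[ℝ] F) : ∃ L : E →ₗ[ℝ] F, ∀ h, W h - B (L h) ∈ (LinearMap.range B)ᗮ := by
  obtain ⟨S, hS⟩ := B.rangeRestrict.exists_rightInverse_of_surjective B.range_rangeRestrict
  refine ⟨S ∘ₗ (LinearMap.range B).orthogonalProjectionOnto.toLinearMap ∘ₗ W, fun h => ?_⟩
  have hBS : ∀ r, B (S r) = r := fun r => congrArg Subtype.val (LinearMap.congr_fun hS r)
  simp [hBS]

/-- Take `u = -L h + s • Z h`, where `B (L h)` is the projection of `W h` onto `range B` and
`Z h ∈ ker B` is the rest. The first term realises the hypothesis `hQ` on `ker Z`, the second adds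
`s ‖Z h‖²`, which absorbs the error `O(‖h‖ ‖Z h‖)` off `ker Z`. -/
theorem exists_forall_norm_le_exists_quadPart_nonneg [FiniteDimensional ℝ E]
    [FiniteDimensional ℝ F] (hB : B.IsSymmetric)
    (hQ : ∀ h v, B v = W h → 0 ≤ quadPart A B W h (-v)) {ε : ℝ} (hε : 0 < ε) :
    ∃ δ > 0, ∀ h : E, ‖h‖ ≤ δ → ∃ u : F, ‖u‖ ≤ ε ∧ 0 ≤ quadPart A B W h u := by
  obtain ⟨L, hL⟩ := exists_linearMap_sub_mem_orthogonal_range B W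
  set Z := W - B ∘ₗ L
  have hBZ : ∀ h, B (Z h) = 0 := fun h => by
    rw [← LinearMap.mem_ker, ← hB.orthogonal_range]
    exact hL h
  let Φ : E →ₗ[ℝ] E →ₗ[ℝ] ℝ := (1 / 2 : ℝ) • (innerₗ E).compl₂ A +
    (1 / 2 : ℝ) • (innerₗ F).compl₁₂ L (B ∘ₗ L) - (innerₗ F).compl₁₂ W L
  have hΦ : ∀ h, Φ h h = quadPart A B W h (-L h) := fun h => by
    simp [Φ, quadPart]
    ring
  obtain ⟨K, hK0, hK⟩ := Φ.exists_lower_bound_of_nonneg_on_ker Z fun h hZh => by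
    rw [hΦ]
    have hWL : W h - B (L h) = 0 := hZh
    exact hQ h (L h) (sub_eq_zero.mp hWL).symm
  obtain ⟨C, hC0, hC⟩ : ∃ C ≥ 0, ∀ h, ‖L h‖ ≤ C * ‖h‖ :=
    ⟨‖LinearMap.toContinuousLinearMap L‖, norm_nonneg _,
      (LinearMap.toContinuousLinearMap L).le_opNorm⟩
  refine ⟨ε / (2 * (C + K + 1)), by positivity, fun h hh => ?_⟩
  have hCK : (C + K) * ‖h‖ ≤ ε / 2 := by
    rw [le_div_iff₀ (by positivity)] at hh
    nlinarith [norm_nonneg h]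
  -- `s = 0` when `Z h = 0`, by the convention `x / 0 = 0`
  set s := ε / (2 * ‖Z h‖)
  have hs : s * ‖Z h‖ ≤ ε / 2 ∧ s * ‖Z h‖ ^ 2 = ε / 2 * ‖Z h‖ := by
    rcases eq_or_ne ‖Z h‖ 0 with hz | hz
    · simp only [hz, mul_zero, ne_eq, OfNat.ofNat_ne_zero, not_false_eq_true, zero_pow, and_true]
      positivity
    · have heq : s * ‖Z h‖ = ε / 2 := by simp only [s]; field_simp
      exact ⟨heq.le, by rw [pow_two, ← mul_assoc, heq]⟩
  refine ⟨-L h + s • Z h, ?_, ?_⟩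
  · calc ‖-L h + s • Z h‖ ≤ ‖L h‖ + s * ‖Z h‖ := by
          refine (norm_add_le _ _).trans ?_
          rw [norm_neg, norm_smul, Real.norm_of_nonneg (by positivity)]
      _ ≤ ε := by nlinarith [hC h, hs.1, mul_nonneg hK0 (norm_nonneg h)]
  · rw [quadPart_neg_add_smul hB (hBZ h) (by simp [Z]), ← hΦ, hs.2]
    nlinarith [hK h, mul_nonneg hC0 (norm_nonneg h), norm_nonneg (Z h)]

lemma eq_zero_and_nonpos_of_isLocalMax_mul_add_mul_sq {a b : ℝ}
    (hmax : IsLocalMax (fun s : ℝ => a * s + b * s ^ 2) 0) : a = 0 ∧ b ≤ 0 := by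
  have hderiv : HasDerivAt (fun s : ℝ => a * s + b * s ^ 2) a 0 := by
    simpa using ((hasDerivAt_id (0 : ℝ)).const_mul a).fun_add
      ((hasDerivAt_pow 2 (0 : ℝ)).const_mul b)
  have ha : a = 0 := hmax.hasDerivAt_eq_zero hderiv
  refine ⟨ha, ?_⟩
  obtain ⟨s, hs, hs0⟩ :=
    ((hmax.filter_mono nhdsWithin_le_nhds).and (self_mem_nhdsWithin (s := {0}ᶜ))).exists
  simp only [ha, zero_mul, zero_add, mul_zero, ne_eq, OfNat.ofNat_ne_zero, not_false_eq_true,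
    zero_pow] at hs
  exact nonpos_of_mul_nonpos_left hs (pow_two_pos_of_ne_zero hs0)

lemma eq_zero_and_nonpos_of_isLocalMax_inner_add_inner {g : F}
    (hmax : IsLocalMax (fun u => ⟪g, u⟫ + (1 / 2) * ⟪u, B u⟫) 0) :
    g = 0 ∧ ∀ u, ⟪u, B u⟫ ≤ 0 := by
  have hline : ∀ u, ⟪g, u⟫ = 0 ∧ (1 / 2) * ⟪u, B u⟫ ≤ 0 := fun u => by
    refine eq_zero_and_nonpos_of_isLocalMax_mul_add_mul_sq ?_
    have hmax' : IsLocalMax (fun u => ⟪g, u⟫ + (1 / 2) * ⟪u, B u⟫) ((fun s : ℝ => s • u) 0) := by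
      simpa only [zero_smul] using hmax
    have := hmax'.comp_continuous (g := fun s : ℝ => s • u) (b := 0)
      (continuous_id.smul continuous_const).continuousAt
    convert this using 2 with s
    simp only [Function.comp, map_smul, inner_smul_left, inner_smul_right, RCLike.conj_to_real]
    ring
  exact ⟨inner_self_eq_zero.mp (hline g).1, fun u => by linarith [(hline u).2]⟩

lemma le_of_eventually_nhdsGT_mul_le_mul_add_sq {a b c : ℝ}
    (h : ∀ᶠ t in 𝓝[>] 0, t * a ≤ t * b + t ^ 2 * c) : a ≤ b := by
  have hlim : Tendsto (fun t : ℝ => b + t * c) (𝓝[>] 0) (𝓝 b) :=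
    ((continuous_const.add (continuous_id.mul continuous_const)).tendsto' 0 b (by simp)).mono_left
      nhdsWithin_le_nhds
  refine ge_of_tendsto hlim ((h.and self_mem_nhdsWithin).mono fun t ⟨hle, ht⟩ => ?_)
  refine le_of_mul_le_mul_left ?_ (show 0 < t from ht)
  linarith

def HasQuadExpansion (f : E → F → ℝ) (x₀ : E) (y₀ : F) (d : E) (g : F) (A : E →ₗ[ℝ] E)
    (B : F →ₗ[ℝ] F) (W : E →ₗ[ℝ] F) : Prop :=
  ∀ h u, f (x₀ + h) (y₀ + u) = f x₀ y₀ + ⟪d, h⟫ + ⟪g, u⟫ + quadPart A B W h u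

namespace HasQuadExpansion

variable {f : E → F → ℝ} {x₀ : E} {y₀ : F} {d : E} {g : F}

lemma apply_eq_add_quadPart (hf : HasQuadExpansion f x₀ y₀ 0 0 A B W) (x : E) (y : F) :
    f x y = f x₀ y₀ + quadPart A B W (x - x₀) (y - y₀) := by
  simpa using hf (x - x₀) (y - y₀)

lemma eq_zero_and_nonpos_of_isLocalMax (hf : HasQuadExpansion f x₀ y₀ d g A B W)
    (hmax : IsLocalMax (f x₀) y₀) : g = 0 ∧ ∀ u, ⟪u, B u⟫ ≤ 0 := by
  refine eq_zero_and_nonpos_of_isLocalMax_inner_add_inner ?_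
  have hshift : Tendsto (fun u : F => y₀ + u) (𝓝 0) (𝓝 y₀) :=
    (continuous_const.add continuous_id).tendsto' 0 y₀ (add_zero y₀)
  filter_upwards [hshift.eventually hmax] with u hu
  have := hf 0 u
  simp only [add_zero, inner_zero_right, quadPart_zero_left] at this
  simp only [map_zero, inner_zero_right, zero_add, mul_zero]
  linarith

end HasQuadExpansion
end QuadPart

section Minimax

variable {n m : ℕ} {f : EuclideanSpace ℝ (Fin n) → EuclideanSpace ℝ (Fin m) → ℝ}
  {x₀ : EuclideanSpace ℝ (Fin n)} {y₀ : EuclideanSpace ℝ (Fin m)} {ε : ℝ}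

lemma coe_le_envU {x : EuclideanSpace ℝ (Fin n)} {u : EuclideanSpace ℝ (Fin m)} (hu : ‖u‖ ≤ ε) :
    (f x (y₀ + u) : EReal) ≤ envU f y₀ ε x :=
  le_iSup₂ (f := fun y _ => (f x y : EReal)) (y₀ + u) (by simpa using hu)

lemma envU_le_coe {x : EuclideanSpace ℝ (Fin n)} {c : ℝ}
    (h : ∀ u, ‖u‖ ≤ ε → f x (y₀ + u) ≤ c) : envU f y₀ ε x ≤ c :=
  iSup₂_le fun y hy => by simpa using EReal.coe_le_coe_iff.mpr (h (y - y₀) hy)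

lemma nonneg_of_envU_le {x : EuclideanSpace ℝ (Fin n)} {c : ℝ} (hε : 0 ≤ ε)
    (hle : envU f y₀ ε x₀ ≤ envU f y₀ ε x) (h : ∀ u, ‖u‖ ≤ ε → f x (y₀ + u) ≤ f x₀ y₀ + c) :
    0 ≤ c := by
  have := (coe_le_envU (f := f) (x := x₀) (u := 0) (by simpa using hε)).trans
    (hle.trans (envU_le_coe h))
  rw [add_zero, EReal.coe_le_coe_iff] at this
  linarith

lemma IsLocalMinimax.isLocalMax (hloc : IsLocalMinimax f x₀ y₀) : IsLocalMax (f x₀) y₀ := by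
  obtain ⟨⟨ε, hε, hy⟩, -⟩ := hloc
  exact eventually_nhds_of_forall_norm_sub_le hε hy

lemma IsLocalMinimax.exists_isLocalMin_envU (hloc : IsLocalMinimax f x₀ y₀) :
    ∃ εs : ℕ → ℝ, (∀ k, 0 < εs k) ∧ Tendsto εs atTop (𝓝 0) ∧
      ∀ k, IsLocalMin (envU f y₀ (εs k)) x₀ := by
  obtain ⟨-, εs, hεpos, hεlim, hmin⟩ := hloc
  refine ⟨εs, hεpos, hεlim, fun k => ?_⟩
  obtain ⟨δ, hδ, hx⟩ := hmin k
  exact eventually_nhds_of_forall_norm_sub_le hδ hx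

namespace HasQuadExpansion

variable {d : EuclideanSpace ℝ (Fin n)} {g : EuclideanSpace ℝ (Fin m)}
  {A : EuclideanSpace ℝ (Fin n) →ₗ[ℝ] EuclideanSpace ℝ (Fin n)}
  {B : EuclideanSpace ℝ (Fin m) →ₗ[ℝ] EuclideanSpace ℝ (Fin m)}
  {W : EuclideanSpace ℝ (Fin n) →ₗ[ℝ] EuclideanSpace ℝ (Fin m)}

lemma norm_sq_le_of_isLocalMin_envU (hf : HasQuadExpansion f x₀ y₀ d 0 A B W)
    (hBneg : ∀ u, ⟪u, B u⟫ ≤ 0) (hε : 0 ≤ ε) (hmin : IsLocalMin (envU f y₀ ε) x₀) :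
    ‖d‖ ^ 2 ≤ ε * ‖W d‖ := by
  have hline : Tendsto (fun t : ℝ => x₀ + (-t) • d) (𝓝[>] 0) (𝓝 x₀) :=
    ((continuous_const.add (continuous_neg.smul continuous_const)).tendsto' 0 x₀
      (by simp)).mono_left nhdsWithin_le_nhds
  refine le_of_eventually_nhdsGT_mul_le_mul_add_sq (c := (1 / 2) * ⟪d, A d⟫) ?_
  filter_upwards [hline.eventually hmin, self_mem_nhdsWithin] with t hle (ht : 0 < t)
  have hd : ⟪d, (-t) • d⟫ = -(t * ‖d‖ ^ 2) := by
    rw [inner_smul_right, real_inner_self_eq_norm_sq, neg_mul]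
  have hA : ⟪(-t) • d, A ((-t) • d)⟫ = t ^ 2 * ⟪d, A d⟫ := by
    rw [map_smul, inner_smul_left, inner_smul_right, RCLike.conj_to_real]
    ring
  have hW : ∀ u, ‖u‖ ≤ ε → ⟪W ((-t) • d), u⟫ ≤ t * (ε * ‖W d‖) := fun u hu =>
    calc ⟪W ((-t) • d), u⟫ ≤ ‖W ((-t) • d)‖ * ‖u‖ := real_inner_le_norm _ _
      _ = t * ‖W d‖ * ‖u‖ := by
        rw [map_smul, norm_smul, Real.norm_eq_abs, abs_neg, abs_of_pos ht]
      _ ≤ t * (ε * ‖W d‖) := by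
        nlinarith [mul_nonneg ht.le (norm_nonneg (W d))]
  have := nonneg_of_envU_le hε hle
    (c := -(t * ‖d‖ ^ 2) + (1 / 2) * (t ^ 2 * ⟪d, A d⟫) + t * (ε * ‖W d‖)) fun u hu => by
      rw [hf, quadPart, hd, hA, inner_zero_left, add_zero]
      linarith [hBneg u, hW u hu]
  linarith

lemma eq_zero_of_forall_isLocalMin_envU (hf : HasQuadExpansion f x₀ y₀ d 0 A B W)
    (hBneg : ∀ u, ⟪u, B u⟫ ≤ 0) {εs : ℕ → ℝ} (hεpos : ∀ k, 0 < εs k)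
    (hεlim : Tendsto εs atTop (𝓝 0)) (hmin : ∀ k, IsLocalMin (envU f y₀ (εs k)) x₀) : d = 0 := by
  have hlim : Tendsto (fun k => εs k * ‖W d‖) atTop (𝓝 0) := by
    simpa using hεlim.mul_const ‖W d‖
  have hd : ‖d‖ ^ 2 ≤ 0 :=
    ge_of_tendsto' hlim fun k => hf.norm_sq_le_of_isLocalMin_envU hBneg (hεpos k).le (hmin k)
  simpa using hd

lemma quadPart_neg_nonneg_of_isLocalMin_envU (hf : HasQuadExpansion f x₀ y₀ 0 0 A B W)
    (hB : B.IsSymmetric) (hBneg : ∀ u, ⟪u, B u⟫ ≤ 0) (hε : 0 ≤ ε)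
    (hmin : IsLocalMin (envU f y₀ ε) x₀) {h : EuclideanSpace ℝ (Fin n)}
    {v : EuclideanSpace ℝ (Fin m)} (hv : B v = W h) : 0 ≤ quadPart A B W h (-v) := by
  have hline : Tendsto (fun t : ℝ => x₀ + t • h) (𝓝[>] 0) (𝓝 x₀) :=
    ((continuous_const.add (continuous_id.smul continuous_const)).tendsto' 0 x₀
      (by simp)).mono_left nhdsWithin_le_nhds
  obtain ⟨t, hle, ht⟩ := ((hline.eventually hmin).and self_mem_nhdsWithin).exists
  have htv : B (t • v) = W (t • h) := by rw [map_smul, map_smul, hv]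
  have := nonneg_of_envU_le hε hle (c := t ^ 2 * quadPart A B W h (-v)) fun u _ => by
    rw [hf.apply_eq_add_quadPart, add_sub_cancel_left, add_sub_cancel_left, ← quadPart_smul,
      smul_neg]
    exact add_le_add_right (quadPart_le_quadPart_neg hB hBneg htv u) _
  exact nonneg_of_mul_nonneg_right this (pow_pos (show (0 : ℝ) < t from ht) 2)

lemma isGlobalMinimax_iff (hf : HasQuadExpansion f x₀ y₀ 0 0 A B W) (hB : B.IsSymmetric) :
    IsGlobalMinimax f x₀ y₀ ↔
      (∀ u, ⟪u, B u⟫ ≤ 0) ∧ ∀ h v, B v = W h → 0 ≤ quadPart A B W h (-v) := by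
  constructor
  · rintro ⟨hmax, hmin⟩
    have hBneg : ∀ u, ⟪u, B u⟫ ≤ 0 := fun u => by
      have := hmax (y₀ + u)
      rw [hf.apply_eq_add_quadPart, sub_self, add_sub_cancel_left, quadPart_zero_left] at this
      linarith
    refine ⟨hBneg, fun h v hv => ?_⟩
    have := hmin (x₀ + h) (f x₀ y₀ + quadPart A B W h (-v)) fun y => by
      rw [hf.apply_eq_add_quadPart, add_sub_cancel_left]
      exact add_le_add_right (quadPart_le_quadPart_neg hB hBneg hv _) _
    linarith
  · rintro ⟨hBneg, hQ⟩
    refine ⟨fun y => ?_, fun x c hc => ?_⟩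
    · rw [hf.apply_eq_add_quadPart, sub_self, quadPart_zero_left]
      linarith [hBneg (y - y₀)]
    · obtain ⟨v, hv⟩ := hB.mem_range_of_forall_le (w := W (x - x₀))
        (M := c - f x₀ y₀ - (1 / 2) * ⟪x - x₀, A (x - x₀)⟫) fun u => by
          have := hc (y₀ + u)
          rw [hf.apply_eq_add_quadPart, add_sub_cancel_left, quadPart] at this
          linarith
      have := hc (y₀ - v)
      rw [hf.apply_eq_add_quadPart, sub_sub_cancel_left] at this
      linarith [hQ _ v hv]

lemma isLocalMinimax_of_isGlobalMinimax (hf : HasQuadExpansion f x₀ y₀ 0 0 A B W)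
    (hB : B.IsSymmetric) (hglob : IsGlobalMinimax f x₀ y₀) : IsLocalMinimax f x₀ y₀ := by
  obtain ⟨-, hQ⟩ := (hf.isGlobalMinimax_iff hB).mp hglob
  refine ⟨⟨1, one_pos, fun y _ => hglob.1 y⟩, fun k => 1 / (k + 1), fun k => by positivity,
    tendsto_one_div_add_atTop_nhds_zero_nat, fun k => ?_⟩
  obtain ⟨δ, hδ, hδu⟩ :=
    exists_forall_norm_le_exists_quadPart_nonneg hB hQ (ε := 1 / (k + 1)) (by positivity)
  refine ⟨δ, hδ, fun x hx => ?_⟩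
  obtain ⟨u, hu, hQu⟩ := hδu (x - x₀) hx
  calc envU f y₀ (1 / (k + 1)) x₀ ≤ f x₀ y₀ := envU_le_coe fun u _ => hglob.1 _
    _ ≤ f x (y₀ + u) := by
      rw [hf.apply_eq_add_quadPart x, add_sub_cancel_left]
      exact_mod_cast le_add_of_nonneg_right hQu
    _ ≤ envU f y₀ (1 / (k + 1)) x := coe_le_envU hu

theorem isLocalMinimax_iff (hf : HasQuadExpansion f x₀ y₀ d g A B W) (hB : B.IsSymmetric) :
    IsLocalMinimax f x₀ y₀ ↔ (d = 0 ∧ g = 0) ∧ IsGlobalMinimax f x₀ y₀ := by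
  constructor
  · intro hloc
    obtain ⟨rfl, hBneg⟩ := hf.eq_zero_and_nonpos_of_isLocalMax hloc.isLocalMax
    obtain ⟨εs, hεpos, hεlim, hmin⟩ := hloc.exists_isLocalMin_envU
    obtain rfl := hf.eq_zero_of_forall_isLocalMin_envU hBneg hεpos hεlim hmin
    refine ⟨⟨rfl, rfl⟩, (hf.isGlobalMinimax_iff hB).mpr ⟨hBneg, fun h v hv => ?_⟩⟩
    exact hf.quadPart_neg_nonneg_of_isLocalMin_envU hB hBneg (hεpos 0).le (hmin 0) hv
  · rintro ⟨⟨rfl, rfl⟩, hglob⟩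
    exact hf.isLocalMinimax_of_isGlobalMinimax hB hglob

end HasQuadExpansion
end Minimax

lemma Matrix.IsSymm.dotProduct_mulVec_comm {ι R : Type*} [Fintype ι] [CommSemiring R]
    {M : Matrix ι ι R} (hM : M.IsSymm) (v w : ι → R) : v ⬝ᵥ (M *ᵥ w) = w ⬝ᵥ (M *ᵥ v) := by
  simpa only [hM.eq] using dotProduct_transpose_mulVec M v w

lemma quadGame_hasQuadExpansion {n m : ℕ} {A : Matrix (Fin n) (Fin n) ℝ}
    {B : Matrix (Fin m) (Fin m) ℝ} (C : Matrix (Fin n) (Fin m) ℝ) (a : Fin n → ℝ)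
    (b : Fin m → ℝ) (c₀ : ℝ) (hA : A.IsSymm) (hB : B.IsSymm) (x₀ : EuclideanSpace ℝ (Fin n))
    (y₀ : EuclideanSpace ℝ (Fin m)) :
    HasQuadExpansion (quadGame A B C a b c₀) x₀ y₀
      (WithLp.toLp 2 (A *ᵥ x₀ + C *ᵥ y₀ + a)) (WithLp.toLp 2 (Cᵀ *ᵥ x₀ + B *ᵥ y₀ + b))
      (toEuclideanLin A) (toEuclideanLin B) (toEuclideanLin Cᵀ) := by
  intro h u
  simp only [quadGame, quadPart, EuclideanSpace.inner_eq_star_dotProduct, star_trivial,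
    Matrix.ofLp_toLpLin, Matrix.toLin'_apply, WithLp.ofLp_add, mulVec_add, dotProduct_add,
    add_dotProduct]
  linarith [hA.dotProduct_mulVec_comm x₀.ofLp h.ofLp, hB.dotProduct_mulVec_comm y₀.ofLp u.ofLp,
    dotProduct_transpose_mulVec C u.ofLp x₀.ofLp, dotProduct_transpose_mulVec C u.ofLp h.ofLp,
    dotProduct_comm (A *ᵥ h.ofLp) h.ofLp, dotProduct_comm (B *ᵥ u.ofLp) u.ofLp,
    dotProduct_comm a h.ofLp, dotProduct_comm b u.ofLp]

/-- For quadratic games, `(x*, y*)` is local minimax iff it is stationary and global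
minimax; in particular, every local minimax point is global minimax. -/
theorem quadGame_localMinimax_iff_stationary_and_globalMinimax {n m : ℕ}
    (A : Matrix (Fin n) (Fin n) ℝ) (B : Matrix (Fin m) (Fin m) ℝ)
    (C : Matrix (Fin n) (Fin m) ℝ) (a : Fin n → ℝ) (b : Fin m → ℝ) (c₀ : ℝ)
    (hA : A.IsSymm) (hB : B.IsSymm)
    (xstar : EuclideanSpace ℝ (Fin n)) (ystar : EuclideanSpace ℝ (Fin m)) :
    (IsLocalMinimax (quadGame A B C a b c₀) xstar ystar ↔
      ((A *ᵥ xstar + C *ᵥ ystar + a = 0 ∧ Cᵀ *ᵥ xstar + B *ᵥ ystar + b = 0) ∧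
        IsGlobalMinimax (quadGame A B C a b c₀) xstar ystar)) ∧
    (IsLocalMinimax (quadGame A B C a b c₀) xstar ystar →
      IsGlobalMinimax (quadGame A B C a b c₀) xstar ystar) := by
  have hBsym : (toEuclideanLin B).IsSymmetric :=
    isSymmetric_toEuclideanLin_iff.mpr (isHermitian_iff_isSymm.mpr hB)
  have key := (quadGame_hasQuadExpansion C a b c₀ hA hB xstar ystar).isLocalMinimax_iff hBsym
  simp only [WithLp.toLp_eq_zero] at key
  exact ⟨key, fun hloc => (key.mp hloc).2⟩
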